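/- For any square-summable sequence a: ℤ → ℝ and Δx > 0, one has ⟨D₊(a), a·𝒮⁺a⟩ = -(Δx²/3) ⟨D₊(a), (D₊(a))²⟩, where 𝒮⁺a is the sequence shifted by one: (𝒮⁺a)_j = a_{j+1}. -/

import Mathlib

noncomputable section
def Dp (Δx : ℝ) (a : ℤ → ℝ) : ℤ → ℝ := fun j => (a (j + 1) - a j) / Δx
def ip (Δx : ℝ) (u v : ℤ → ℝ) : ℝ := Δx * ∑' j : ℤ, u j * v j

section SquareSummable

variable {ι : Type*} {f g h : ι → ℝ}

lemma summable_sq_sub (hf : Summable fun i => f i ^ 2) (hg : Summable fun i => g i ^ 2) :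
    Summable fun i => (f i - g i) ^ 2 :=
  ((hf.add hg).mul_left 2).of_nonneg_of_le (fun _ => sq_nonneg _)
    fun i => by nlinarith [sq_nonneg (f i + g i)]

lemma summable_mul_of_summable_sq (hf : Summable fun i => f i ^ 2)
    (hg : Summable fun i => g i ^ 2) : Summable fun i => f i * g i :=
  ((hf.add hg).div_const 2).of_norm_bounded fun i => by
    rw [Real.norm_eq_abs, abs_mul]
    nlinarith [sq_nonneg (|f i| - |g i|), sq_abs (f i), sq_abs (g i)]

/-- `ℓ²` is closed under triple products, since an `ℓ²` sequence is eventually bounded by `1`. -/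
lemma summable_mul_mul_of_summable_sq (hf : Summable fun i => f i ^ 2)
    (hg : Summable fun i => g i ^ 2) (hh : Summable fun i => h i ^ 2) :
    Summable fun i => f i * g i * h i := by
  have hfg := (summable_mul_of_summable_sq hf hg).norm
  have hh_small : ∀ᶠ i in Filter.cofinite, h i ^ 2 ≤ 1 :=
    hh.tendsto_cofinite_zero.eventually (eventually_le_nhds one_pos)
  refine hfg.of_norm_bounded_eventually ?_
  filter_upwards [hh_small] with i hi
  rw [norm_mul]
  have : ‖h i‖ ≤ 1 := by
    rw [Real.norm_eq_abs, abs_le_one_iff_mul_self_le_one]; nlinarith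
  exact mul_le_of_le_one_right (norm_nonneg _) this

end SquareSummable

lemma tsum_int_sub_shift_eq_zero {G : Type*} [AddCommGroup G] [TopologicalSpace G]
    [IsTopologicalAddGroup G] [T2Space G] {f : ℤ → G} (hf : Summable f) :
    ∑' j, (f (j + 1) - f j) = 0 := by
  have hf' : Summable fun j => f (j + 1) := (Equiv.addRight 1).summable_iff.mpr hf
  rw [hf'.tsum_sub hf, sub_eq_zero]
  exact (Equiv.addRight 1).tsum_eq f

/-- Summing `(b - a)³ + 3 (b - a) a b = b³ - a³` over `(a, b) = (a_j, a_{j+1})` telescopes. -/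
lemma tsum_int_sub_cube_eq (a : ℤ → ℝ) (ha : Summable fun j => a j ^ 2) :
    ∑' j, (a (j + 1) - a j) ^ 3 = -3 * ∑' j, (a (j + 1) - a j) * (a j * a (j + 1)) := by
  have ha' : Summable fun j => a (j + 1) ^ 2 := ha.comp_injective (add_left_injective 1)
  have hd := summable_sq_sub ha' ha
  have hcube : Summable fun j => (a (j + 1) - a j) ^ 3 := by
    simpa only [pow_three'] using summable_mul_mul_of_summable_sq hd hd hd
  have hmixed : Summable fun j => (a (j + 1) - a j) * (a j * a (j + 1)) := by
    simpa only [mul_assoc] using summable_mul_mul_of_summable_sq hd ha ha'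
  have htel : ∑' j, (a (j + 1) ^ 3 - a j ^ 3) = 0 :=
    tsum_int_sub_shift_eq_zero (f := fun j => a j ^ 3) <| by
      simpa only [pow_three'] using summable_mul_mul_of_summable_sq ha ha ha
  have hsum : ∑' j, (a (j + 1) - a j) ^ 3
      + 3 * ∑' j, (a (j + 1) - a j) * (a j * a (j + 1)) = 0 := by
    rw [← tsum_mul_left, ← hcube.tsum_add (hmixed.mul_left 3), ← htel]
    exact tsum_congr fun j => by ring
  linarith

theorem stmt7_general (Δx : ℝ) (a : ℤ → ℝ)
    (ha : Summable fun j : ℤ => (a j) ^ 2) :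
    ip Δx (Dp Δx a) (fun j => a j * a (j + 1))
      = -(Δx ^ 2 / 3) * ip Δx (Dp Δx a) (fun j => (Dp Δx a j) ^ 2) := by
  rcases eq_or_ne Δx 0 with rfl | hΔx
  · simp [ip]
  have hmixed : ∀ j, Dp Δx a j * (a j * a (j + 1))
      = (a (j + 1) - a j) * (a j * a (j + 1)) / Δx := fun j => by simp only [Dp]; ring
  have hcube : ∀ j, Dp Δx a j * Dp Δx a j ^ 2 = (a (j + 1) - a j) ^ 3 / Δx ^ 3 :=
    fun j => by simp only [Dp]; ring
  simp only [ip, hmixed, hcube, tsum_div_const, tsum_int_sub_cube_eq a ha]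
  field_simp

/-- `⟨D₊(a), a·𝒮⁺a⟩ = -(Δx²/3)⟨D₊(a), (D₊(a))²⟩`. -/
theorem stmt7 (Δx : ℝ) (hΔx : 0 < Δx) (a : ℤ → ℝ)
    (ha : Summable fun j : ℤ => (a j) ^ 2) :
    ip Δx (Dp Δx a) (fun j => a j * a (j + 1))
      = -(Δx ^ 2 / 3) * ip Δx (Dp Δx a) (fun j => (Dp Δx a j) ^ 2) :=
  stmt7_general Δx a ha
end
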